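/- arXiv:1301.0477 — 6 statements merged into one kernel-verified Lean document; each statement's English description precedes it below -/
import Mathlib

section
/- Let S be a covering structure of a covering map p : X → Y. The following are equivalent: (a) S is an overlay structure, i.e., for every x ∈ X the star st(x, S) is a slice of p; (b) whenever a slice U ∈ S intersects two distinct slices V, W ∈ S, one has p(V) ≠ p(W); (c) whenever two slices U, V ∈ S intersect, U ∩ V is a slice over p(U) ∩ p(V), i.e., p restricts to a homeomorphism of U ∩ V onto p(U) ∩ p(V). -/
open Set Pointwise

/-- `p` restricts to a homeomorphism of `U ⊆ X` onto `V ⊆ Y`. -/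
def RestrictsToHomeo {X Y : Type*} [TopologicalSpace X] [TopologicalSpace Y]
    (p : X → Y) (U : Set X) (V : Set Y) : Prop :=
  ∃ e : U ≃ₜ V, ∀ u : U, (e u : Y) = p u

/-- A **slice** of `p : X → Y`: an open set `U ⊆ X` such that `p ⁻¹' (p '' U)` is a
disjoint union of open sets, one of which is `U`, each mapped by `p` homeomorphically
onto `p '' U`. -/
def IsSlice {X Y : Type*} [TopologicalSpace X] [TopologicalSpace Y]
    (p : X → Y) (U : Set X) : Prop :=
  IsOpen U ∧ ∃ D : Set (Set X), U ∈ D ∧ (∀ W ∈ D, IsOpen W) ∧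
    D.PairwiseDisjoint id ∧ ⋃₀ D = p ⁻¹' (p '' U) ∧
    ∀ W ∈ D, RestrictsToHomeo p W (p '' U)

/-- A **covering structure** of `p : X → Y`: an open cover `S` of `X` by slices of `p`
such that for each `U ∈ S`, `p ⁻¹' (p '' U)` is a disjoint union of elements of `S`,
each with image `p '' U`. -/
def IsCoveringStructure {X Y : Type*} [TopologicalSpace X] [TopologicalSpace Y]
    (p : X → Y) (S : Set (Set X)) : Prop :=
  (∀ U ∈ S, IsSlice p U) ∧ ⋃₀ S = Set.univ ∧
    ∀ U ∈ S, ∃ D ⊆ S, D.PairwiseDisjoint id ∧ ⋃₀ D = p ⁻¹' (p '' U) ∧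
      ∀ W ∈ D, p '' W = p '' U

/-- The **star** of a point `x` with respect to a family `S` of subsets. -/
def st {X : Type*} (x : X) (S : Set (Set X)) : Set X := ⋃₀ {U | U ∈ S ∧ x ∈ U}

/-- An **overlay structure** of `p : X → Y`: a covering structure `S` such that for every
`x ∈ X` the star `st x S` is a slice of `p`. -/
def IsOverlayStructure {X Y : Type*} [TopologicalSpace X] [TopologicalSpace Y]
    (p : X → Y) (S : Set (Set X)) : Prop :=
  IsCoveringStructure p S ∧ ∀ x : X, IsSlice p (st x S)

/-- `p` is an **overlay** if it admits an overlay structure. -/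
def IsOverlay {X Y : Type*} [TopologicalSpace X] [TopologicalSpace Y]
    (p : X → Y) : Prop :=
  ∃ S : Set (Set X), IsOverlayStructure p S

/-! All three conditions are equivalent to `p` being injective on every star. For (c) this is
because `p`, being a continuous open map, restricts to a homeomorphism onto the image of every
open set on which it is injective, so (c) only says `p '' (U ∩ V) = p '' U ∩ p '' V`. Conversely,
if `p` is injective on stars, then the stars centred at the points of a fibre are pairwise
disjoint (two of them meeting at `w` both lie in the star of `w`), they all have the same
image, and they cover the preimage of that image because membership in a common element of `S`
lifts along `p` in a covering structure. -/

section Star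

variable {X : Type*} {S : Set (Set X)} {x y : X}

theorem mem_st_iff : y ∈ st x S ↔ ∃ U ∈ S, x ∈ U ∧ y ∈ U := by
  simp [st, and_assoc]

theorem mem_st_comm : y ∈ st x S ↔ x ∈ st y S := by
  simp only [mem_st_iff, and_comm (a := x ∈ _)]

theorem subset_st {U : Set X} (hU : U ∈ S) (hx : x ∈ U) : U ⊆ st x S :=
  subset_sUnion_of_mem ⟨hU, hx⟩

theorem image_ne_of_injOn_st {Y : Type*} {p : X → Y} (hinj : ∀ z, InjOn p (st z S)) :
    ∀ U ∈ S, ∀ V ∈ S, ∀ W ∈ S,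
      (U ∩ V).Nonempty → (U ∩ W).Nonempty → V ≠ W → p '' V ≠ p '' W := by
  rintro U hU V hV W hW ⟨a, haU, haV⟩ ⟨b, hbU, hbW⟩ hVW himage
  obtain ⟨c, hcW, hc⟩ : p a ∈ p '' W := himage ▸ mem_image_of_mem p haV
  have haW : a ∈ W := by
    rwa [hinj b (subset_st hU hbU haU) (subset_st hW hbW hcW) hc.symm]
  exact hVW (((hinj a).image_eq_image_iff (subset_st hV haV) (subset_st hW haW)).1 himage)

end Star

section Covering

variable {X Y : Type*} [TopologicalSpace X] [TopologicalSpace Y] {p : X → Y}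

namespace RestrictsToHomeo

variable {U : Set X} {V : Set Y}

theorem image_eq (h : RestrictsToHomeo p U V) : p '' U = V := by
  obtain ⟨e, he⟩ := h
  ext y
  constructor
  · rintro ⟨u, hu, rfl⟩
    exact he ⟨u, hu⟩ ▸ (e ⟨u, hu⟩).2
  · intro hy
    obtain ⟨u, hu⟩ := e.surjective ⟨y, hy⟩
    exact ⟨u, u.2, by rw [← he u, hu]⟩

theorem injOn (h : RestrictsToHomeo p U V) : InjOn p U := by
  obtain ⟨e, he⟩ := h
  intro a ha b hb hab
  have : e ⟨a, ha⟩ = e ⟨b, hb⟩ := Subtype.ext (by rw [he, he, hab])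
  exact congrArg Subtype.val (e.injective this)

end RestrictsToHomeo

theorem restrictsToHomeo_image_of_injOn (hc : Continuous p) (ho : IsOpenMap p) {U : Set X}
    (hU : IsOpen U) (hinj : InjOn p U) : RestrictsToHomeo p U (p '' U) := by
  have hemb : Topology.IsOpenEmbedding (U.domRestrict p) :=
    .of_continuous_injective_isOpenMap (hc.comp continuous_subtype_val)
      (injOn_iff_injective.1 hinj) (ho.domRestrict hU)
  exact ⟨hemb.isEmbedding.toHomeomorph.trans (.setCongr (range_domRestrict p U)),
    fun _ => rfl⟩

theorem IsSlice.injOn {U : Set X} (h : IsSlice p U) : InjOn p U := by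
  obtain ⟨-, D, hUD, -, -, -, hD⟩ := h
  exact (hD U hUD).injOn

theorem isOpen_st {S : Set (Set X)} (hS : ∀ U ∈ S, IsOpen U) (x : X) : IsOpen (st x S) :=
  isOpen_sUnion fun U hU => hS U hU.1

namespace IsCoveringStructure

variable {S : Set (Set X)} (hS : IsCoveringStructure p S)
include hS

theorem isOpen {U : Set X} (hU : U ∈ S) : IsOpen U :=
  (hS.1 U hU).1

theorem injOn {U : Set X} (hU : U ∈ S) : InjOn p U :=
  (hS.1 U hU).injOn

theorem exists_mem_image_eq {V : Set X} (hV : V ∈ S) {x : X} (hx : p x ∈ p '' V) :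
    ∃ W ∈ S, x ∈ W ∧ p '' W = p '' V := by
  obtain ⟨D, hDS, -, hD, hDV⟩ := hS.2.2 V hV
  obtain ⟨W, hWD, hxW⟩ : x ∈ ⋃₀ D := hD ▸ hx
  exact ⟨W, hDS hWD, hxW, hDV W hWD⟩

theorem exists_mem_st_of_mem_st {x y y' : X} (hy : y ∈ st x S) (hy' : p y' = p y) :
    ∃ x', p x' = p x ∧ y' ∈ st x' S := by
  obtain ⟨V, hV, hxV, hyV⟩ := mem_st_iff.1 hy
  obtain ⟨W, hW, hy'W, hWV⟩ := hS.exists_mem_image_eq hV (hy' ▸ mem_image_of_mem p hyV)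
  obtain ⟨x', hx'W, hx'⟩ : p x ∈ p '' W := hWV ▸ mem_image_of_mem p hxV
  exact ⟨x', hx', subset_st hW hx'W hy'W⟩

theorem image_st_subset {x z : X} (h : p z = p x) : p '' st z S ⊆ p '' st x S := by
  rintro _ ⟨a, ha, rfl⟩
  obtain ⟨a', ha', hx⟩ := hS.exists_mem_st_of_mem_st (mem_st_comm.1 ha) h.symm
  exact ⟨a', mem_st_comm.1 hx, ha'⟩

theorem image_st_eq {x z : X} (h : p z = p x) : p '' st z S = p '' st x S :=
  (hS.image_st_subset h).antisymm (hS.image_st_subset h.symm)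

theorem sUnion_st_fiber (x : X) :
    ⋃₀ ((st · S) '' (p ⁻¹' {p x})) = p ⁻¹' (p '' st x S) := by
  refine Subset.antisymm ?_ fun z ⟨a, ha, hz⟩ => ?_
  · rintro z ⟨_, ⟨x', hx', rfl⟩, hz⟩
    exact hS.image_st_eq hx' ▸ mem_image_of_mem p hz
  · obtain ⟨x', hx', hz'⟩ := hS.exists_mem_st_of_mem_st ha hz.symm
    exact ⟨st x' S, ⟨x', hx', rfl⟩, hz'⟩

theorem isSlice_st (hc : Continuous p) (ho : IsOpenMap p) (hinj : ∀ z, InjOn p (st z S))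
    (x : X) : IsSlice p (st x S) := by
  have hopen := isOpen_st fun _ => hS.isOpen
  refine ⟨hopen x, (st · S) '' (p ⁻¹' {p x}), ⟨x, rfl, rfl⟩, ?_, ?_, hS.sUnion_st_fiber x, ?_⟩
  · rintro _ ⟨z, -, rfl⟩
    exact hopen z
  · rintro _ ⟨z, hz, rfl⟩ _ ⟨z', hz', rfl⟩ hne
    refine disjoint_left.2 fun w hw hw' => hne ?_
    rw [hinj w (mem_st_comm.1 hw) (mem_st_comm.1 hw') (hz.trans hz'.symm)]
  · rintro _ ⟨z, hz, rfl⟩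
    exact hS.image_st_eq hz ▸ restrictsToHomeo_image_of_injOn hc ho (hopen z) (hinj z)

theorem image_inter_eq_of_image_ne
    (hb : ∀ U ∈ S, ∀ V ∈ S, ∀ W ∈ S,
      (U ∩ V).Nonempty → (U ∩ W).Nonempty → V ≠ W → p '' V ≠ p '' W) :
    ∀ U ∈ S, ∀ V ∈ S, (U ∩ V).Nonempty → p '' (U ∩ V) = p '' U ∩ p '' V := by
  refine fun U hU V hV hUV => (image_inter_subset p U V).antisymm ?_
  rintro _ ⟨⟨u, hu, rfl⟩, huV⟩
  obtain ⟨W, hW, huW, hWV⟩ := hS.exists_mem_image_eq hV huV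
  obtain rfl : W = V :=
    by_contra fun hne => hb U hU V hV W hW hUV ⟨u, hu, huW⟩ (Ne.symm hne) hWV.symm
  exact mem_image_of_mem p ⟨hu, huW⟩

theorem injOn_st_of_image_inter
    (h : ∀ U ∈ S, ∀ V ∈ S, (U ∩ V).Nonempty → p '' (U ∩ V) = p '' U ∩ p '' V) (z : X) :
    InjOn p (st z S) := by
  intro a ha b hb hab
  obtain ⟨V, hV, hzV, haV⟩ := mem_st_iff.1 ha
  obtain ⟨W, hW, hzW, hbW⟩ := mem_st_iff.1 hb
  obtain ⟨c, ⟨hcV, hcW⟩, hc⟩ : p a ∈ p '' (V ∩ W) := by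
    rw [h V hV W hW ⟨z, hzV, hzW⟩]
    exact ⟨mem_image_of_mem p haV, hab ▸ mem_image_of_mem p hbW⟩
  rw [← hS.injOn hV hcV haV hc, ← hS.injOn hW hcW hbW (hc.trans hab)]

end IsCoveringStructure

end Covering

/-- Let `S` be a covering structure of a covering map `p : X → Y`.  The following are
equivalent: (a) `S` is an overlay structure, i.e. every star `st x S` is a slice of `p`;
(b) if a slice `U ∈ S` intersects two distinct slices `V, W ∈ S`, then `p '' V ≠ p '' W`;
(c) if two slices `U, V ∈ S` intersect, then `U ∩ V` is a slice over `p '' U ∩ p '' V`,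
i.e. `p` restricts to a homeomorphism of `U ∩ V` onto `p '' U ∩ p '' V`. -/
theorem overlay_structure_characterizations
    {X Y : Type*} [TopologicalSpace X] [TopologicalSpace Y]
    (p : X → Y) (hp : IsCoveringMap p)
    (S : Set (Set X)) (hS : IsCoveringStructure p S) :
    ((∀ x : X, IsSlice p (st x S)) ↔
      (∀ U ∈ S, ∀ V ∈ S, ∀ W ∈ S,
        (U ∩ V).Nonempty → (U ∩ W).Nonempty → V ≠ W → p '' V ≠ p '' W)) ∧
    ((∀ U ∈ S, ∀ V ∈ S, ∀ W ∈ S,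
        (U ∩ V).Nonempty → (U ∩ W).Nonempty → V ≠ W → p '' V ≠ p '' W) ↔
      (∀ U ∈ S, ∀ V ∈ S, (U ∩ V).Nonempty →
        RestrictsToHomeo p (U ∩ V) (p '' U ∩ p '' V))) := by
  refine ⟨⟨fun ha => image_ne_of_injOn_st fun x => (ha x).injOn, fun hb => ?_⟩,
    ⟨fun hb U hU V hV hUV => ?_, fun hc => ?_⟩⟩
  · exact hS.isSlice_st hp.continuous hp.isOpenMap
      (hS.injOn_st_of_image_inter (hS.image_inter_eq_of_image_ne hb))
  · rw [← hS.image_inter_eq_of_image_ne hb U hU V hV hUV]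
    exact restrictsToHomeo_image_of_injOn hp.continuous hp.isOpenMap
      ((hS.isOpen hU).inter (hS.isOpen hV)) ((hS.injOn hU).mono inter_subset_left)
  · exact image_ne_of_injOn_st <| hS.injOn_st_of_image_inter
      fun U hU V hV hUV => (hc U hU V hV hUV).image_eq
end

section
/- Let p : X → Y be a covering map and let U be an overlay cover of Y (the image of an overlay structure S of p). Then any open cover V of Y refining U is again an overlay cover of Y: the sets U_s ∩ p⁻¹(W), for W ∈ V with W ⊆ U ∈ U and U_s a slice over U from the structure S, form an overlay structure of p with image V. -/
open Set Pointwise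

lemma img_inter {X Y : Type*} {p : X → Y} {V : Set X} {W : Set Y} (h : W ⊆ p '' V) :
    p '' (V ∩ p ⁻¹' W) = W := by
  rw [Set.image_inter_preimage, Set.inter_eq_self_of_subset_right h]

lemma rth_injOn {X Y : Type*} [TopologicalSpace X] [TopologicalSpace Y]
    {p : X → Y} {V : Set X} {Z : Set Y} (h : RestrictsToHomeo p V Z) :
    Set.InjOn p V := by
  obtain ⟨e, he⟩ := h
  intro a ha b hb hab
  have : e ⟨a, ha⟩ = e ⟨b, hb⟩ := Subtype.ext (by rw [he, he]; exact hab)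
  simpa [Subtype.ext_iff] using e.injective this

lemma rth_inter {X Y : Type*} [TopologicalSpace X] [TopologicalSpace Y]
    {p : X → Y} {V : Set X} {Z W : Set Y}
    (h : RestrictsToHomeo p V Z) (hW : W ⊆ Z) :
    RestrictsToHomeo p (V ∩ p ⁻¹' W) W := by
  obtain ⟨e, he⟩ := h
  refine ⟨{
    toFun := fun x => ⟨p x, x.2.2⟩
    invFun := fun w => ⟨(e.symm ⟨w, hW w.2⟩ : X), (e.symm ⟨w, hW w.2⟩).2, by
        simp only [Set.mem_preimage]
        rw [← he (e.symm ⟨w, hW w.2⟩)]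
        simp [w.2]⟩
    left_inv := fun x => by
      have h1 : e ⟨x.1, x.2.1⟩ = ⟨p x.1, hW x.2.2⟩ := Subtype.ext (he _)
      apply Subtype.ext
      show ((e.symm ⟨p x.1, _⟩ : V) : X) = x.1
      rw [← h1, e.symm_apply_apply]
    right_inv := fun w => by
      apply Subtype.ext
      show p _ = (w : Y)
      rw [← he]
      simp
    continuous_toFun := by
      apply Continuous.subtype_mk
      have : (fun x : ↥(V ∩ p ⁻¹' W) => p x) =
          fun x => (e (Set.inclusion Set.inter_subset_left x) : Y) := by
        funext x; rw [he]
      rw [this]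
      exact continuous_subtype_val.comp (e.continuous.comp (continuous_inclusion _))
    continuous_invFun := by
      apply Continuous.subtype_mk
      exact continuous_subtype_val.comp (e.symm.continuous.comp
        (Continuous.subtype_mk continuous_subtype_val _)) }, fun u => rfl⟩

lemma slice_injOn {X Y : Type*} [TopologicalSpace X] [TopologicalSpace Y]
    {p : X → Y} {A : Set X} (hA : IsSlice p A) : Set.InjOn p A := by
  obtain ⟨-, D, hAD, -, -, -, hDh⟩ := hA
  exact rth_injOn (hDh A hAD)

lemma slice_inter {X Y : Type*} [TopologicalSpace X] [TopologicalSpace Y]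
    {p : X → Y} (hc : Continuous p) {A : Set X} {W : Set Y}
    (hA : IsSlice p A) (hWo : IsOpen W) (hW : W ⊆ p '' A) :
    IsSlice p (A ∩ p ⁻¹' W) := by
  obtain ⟨hAo, D, hAD, hDo, hDd, hDu, hDh⟩ := hA
  refine ⟨hAo.inter (hWo.preimage hc), (fun V => V ∩ p ⁻¹' W) '' D,
    ⟨A, hAD, rfl⟩, ?_, ?_, ?_, ?_⟩
  · rintro _ ⟨V, hV, rfl⟩; exact (hDo V hV).inter (hWo.preimage hc)
  · rintro _ ⟨V₁, hV₁, rfl⟩ _ ⟨V₂, hV₂, rfl⟩ hne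
    have hne' : V₁ ≠ V₂ := by rintro rfl; exact hne rfl
    exact (hDd hV₁ hV₂ hne').mono Set.inter_subset_left Set.inter_subset_left
  · rw [img_inter hW, Set.sUnion_image]
    ext z
    simp only [Set.mem_iUnion, Set.mem_inter_iff, Set.mem_preimage, exists_prop]
    constructor
    · rintro ⟨V, hV, hzV, hzW⟩; exact hzW
    · intro hz
      have : z ∈ ⋃₀ D := by rw [hDu]; exact hW hz
      obtain ⟨V, hV, hzV⟩ := this
      exact ⟨V, hV, hzV, hz⟩
  · rintro _ ⟨V, hV, rfl⟩
    rw [img_inter hW]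
    exact rth_inter (hDh V hV) hW

/-- Let `p : X → Y` be a covering map, `S` an overlay structure of `p`, and
`𝒰 = {p '' U | U ∈ S}` the corresponding overlay cover of `Y`.  Then any open cover `𝒱`
of `Y` refining `𝒰` is again an overlay cover of `Y`: the sets `Us ∩ p ⁻¹' W`, for
`W ∈ 𝒱` contained in the image of a slice `Us ∈ S`, form an overlay structure of `p`
whose image is `𝒱`. -/
theorem refinement_of_overlay_cover
    {X Y : Type*} [TopologicalSpace X] [TopologicalSpace Y]
    (p : X → Y) (hp : IsCoveringMap p)
    (S : Set (Set X)) (hS : IsOverlayStructure p S)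
    (𝒱 : Set (Set Y)) (hVopen : ∀ W ∈ 𝒱, IsOpen W) (hVcov : ⋃₀ 𝒱 = Set.univ)
    (href : ∀ W ∈ 𝒱, ∃ U ∈ S, W ⊆ p '' U) :
    IsOverlayStructure p
      {A : Set X | ∃ W ∈ 𝒱, ∃ Us ∈ S, W ⊆ p '' Us ∧ A = Us ∩ p ⁻¹' W} ∧
    {V' : Set Y | ∃ A ∈ {A : Set X | ∃ W ∈ 𝒱, ∃ Us ∈ S, W ⊆ p '' Us ∧ A = Us ∩ p ⁻¹' W},
        V' = p '' A} = 𝒱 := by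
  
  obtain ⟨⟨hSslice, hScov, hSstr⟩, hSstar⟩ := hS
  constructor
  · refine ⟨⟨?_, ?_, ?_⟩, ?_⟩
    · rintro A ⟨W, hW, Us, hUs, hWU, rfl⟩
      exact slice_inter hp.continuous (hSslice Us hUs) (hVopen W hW) hWU
    · apply Set.eq_univ_of_forall
      intro x
      have hx𝒱 : p x ∈ ⋃₀ 𝒱 := by rw [hVcov]; trivial
      obtain ⟨W, hW, hxW⟩ := hx𝒱
      obtain ⟨Us, hUs, hWU⟩ := href W hW
      obtain ⟨D, hDS, -, hDu, hDimg⟩ := hSstr Us hUs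
      have hx : x ∈ ⋃₀ D := by rw [hDu]; exact hWU hxW
      obtain ⟨V, hVD, hxV⟩ := hx
      exact ⟨V ∩ p ⁻¹' W, ⟨W, hW, V, hDS hVD, hWU.trans (hDimg V hVD).superset, rfl⟩,
        hxV, hxW⟩
    · rintro A ⟨W, hW, Us, hUs, hWU, rfl⟩
      obtain ⟨D, hDS, hDd, hDu, hDimg⟩ := hSstr Us hUs
      refine ⟨(fun V => V ∩ p ⁻¹' W) '' D, ?_, ?_, ?_, ?_⟩
      · rintro _ ⟨V, hV, rfl⟩
        exact ⟨W, hW, V, hDS hV, hWU.trans (hDimg V hV).superset, rfl⟩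
      · rintro _ ⟨V₁, hV₁, rfl⟩ _ ⟨V₂, hV₂, rfl⟩ hne
        have hne' : V₁ ≠ V₂ := by rintro rfl; exact hne rfl
        exact (hDd hV₁ hV₂ hne').mono Set.inter_subset_left Set.inter_subset_left
      · rw [img_inter hWU, Set.sUnion_image]
        ext z
        simp only [Set.mem_iUnion, Set.mem_inter_iff, Set.mem_preimage, exists_prop]
        constructor
        · rintro ⟨V, hV, hzV, hzW⟩; exact hzW
        · intro hz
          have : z ∈ ⋃₀ D := by rw [hDu]; exact hWU hz
          obtain ⟨V, hV, hzV⟩ := this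
          exact ⟨V, hV, hzV, hz⟩
      · rintro _ ⟨V, hV, rfl⟩
        rw [img_inter hWU, img_inter (hWU.trans (hDimg V hV).superset)]
    · intro x
      have hsub : (⋃₀ {W | W ∈ 𝒱 ∧ p x ∈ W ∧ ∃ Us ∈ S, x ∈ Us ∧ W ⊆ p '' Us})
          ⊆ p '' (st x S) := by
        rintro y ⟨W, ⟨hW𝒱, hpxW, Us, hUs, hxUs, hWU⟩, hyW⟩
        obtain ⟨u, hu, rfl⟩ := hWU hyW
        exact ⟨u, ⟨Us, ⟨hUs, hxUs⟩, hu⟩, rfl⟩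
      have hinj : Set.InjOn p (st x S) := slice_injOn (hSstar x)
      have heq : st x {A : Set X | ∃ W ∈ 𝒱, ∃ Us ∈ S, W ⊆ p '' Us ∧ A = Us ∩ p ⁻¹' W}
          = st x S ∩ p ⁻¹' (⋃₀ {W | W ∈ 𝒱 ∧ p x ∈ W ∧ ∃ Us ∈ S, x ∈ Us ∧ W ⊆ p '' Us}) := by
        ext z
        constructor
        · rintro ⟨A, ⟨⟨W, hW, Us, hUs, hWU, rfl⟩, hxA⟩, hzA⟩
          exact ⟨⟨Us, ⟨hUs, hxA.1⟩, hzA.1⟩, ⟨W, ⟨hW, hxA.2, Us, hUs, hxA.1, hWU⟩, hzA.2⟩⟩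
        · rintro ⟨hzst, hzW⟩
          obtain ⟨W, ⟨hW𝒱, hpxW, Us, hUs, hxUs, hWU⟩, hzWmem⟩ := hzW
          obtain ⟨u, hu, hpu⟩ := hWU hzWmem
          have huSt : u ∈ st x S := ⟨Us, ⟨hUs, hxUs⟩, hu⟩
          have huz : u = z := hinj huSt hzst hpu
          subst huz
          exact ⟨Us ∩ p ⁻¹' W, ⟨⟨W, hW𝒱, Us, hUs, hWU, rfl⟩, hxUs, hpxW⟩, hu, hzWmem⟩
      rw [heq]
      exact slice_inter hp.continuous (hSstar x)
        (isOpen_sUnion fun W hW => hVopen W hW.1) hsub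
  · ext W'
    simp only [Set.mem_setOf_eq]
    constructor
    · rintro ⟨A, ⟨W, hW, Us, hUs, hWU, rfl⟩, rfl⟩
      rwa [img_inter hWU]
    · intro hW'
      obtain ⟨Us, hUs, hsubW⟩ := href W' hW'
      exact ⟨Us ∩ p ⁻¹' W', ⟨W', hW', Us, hUs, hsubW, rfl⟩, (img_inter hsubW).symm⟩
end

section
/- If p : X → Y is a covering map with finite fibers and X is Hausdorff, then any open cover V of X can be refined by a covering structure of p. -/
open Set Pointwise

/-!
Over each `y : Y`, a local trivialization `t` of `p` near `y` splits the preimage of any open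
`W ⊆ t.baseSet` into the sheets `t⁻¹(W × {i})`, one per point `i` of the fibre. Since the fibre
is finite, `W` can be shrunk around `y` so that each sheet lies in a member of `𝒱` containing the
lift of `y` to it. The sheets over these neighbourhoods, for all `y`, form the covering structure.
-/

section

variable {X Y : Type*} [TopologicalSpace X] [TopologicalSpace Y] {p : X → Y}

theorem RestrictsToHomeo.image_eq_s9 {A : Set X} {W : Set Y} (h : RestrictsToHomeo p A W) :
    p '' A = W := by
  obtain ⟨e, he⟩ := h
  ext y
  refine ⟨?_, fun hy => ⟨e.symm ⟨y, hy⟩, (e.symm ⟨y, hy⟩).2, ?_⟩⟩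
  · rintro ⟨x, hx, rfl⟩
    simpa only [he] using (e ⟨x, hx⟩).2
  · rw [← he, e.apply_symm_apply]

variable (p) in
def IsSheetPartition (W : Set Y) (D : Set (Set X)) : Prop :=
  D.PairwiseDisjoint id ∧ ⋃₀ D = p ⁻¹' W ∧ ∀ A ∈ D, IsOpen A ∧ RestrictsToHomeo p A W

namespace IsSheetPartition

variable {W : Set Y} {D : Set (Set X)}

theorem image_eq_s9 (h : IsSheetPartition p W D) {A : Set X} (hA : A ∈ D) : p '' A = W :=
  (h.2.2 A hA).2.image_eq_s9

theorem isSlice (h : IsSheetPartition p W D) {A : Set X} (hA : A ∈ D) : IsSlice p A := by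
  rw [IsSlice, h.image_eq_s9 hA]
  exact ⟨(h.2.2 A hA).1, D, hA, fun B hB => (h.2.2 B hB).1, h.1, h.2.1, fun B hB => (h.2.2 B hB).2⟩

theorem of_preimage_eq_empty (hW : p ⁻¹' W = ∅) : IsSheetPartition p W ∅ :=
  ⟨pairwiseDisjoint_empty, by rw [sUnion_empty, hW], fun _ h => h.elim⟩

end IsSheetPartition

theorem isCoveringStructure_iUnion {ι : Type*} {W : ι → Set Y} {D : ι → Set (Set X)}
    (hD : ∀ i, IsSheetPartition p (W i) (D i)) (hW : ∀ y, ∃ i, y ∈ W i) :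
    IsCoveringStructure p (⋃ i, D i) := by
  refine ⟨?_, ?_, ?_⟩
  · simp only [mem_iUnion]
    rintro A ⟨i, hA⟩
    exact (hD i).isSlice hA
  · refine eq_univ_of_forall fun x => ?_
    obtain ⟨i, hi⟩ := hW (p x)
    have hx : x ∈ ⋃₀ D i := by rwa [(hD i).2.1]
    obtain ⟨A, hA, hxA⟩ := hx
    exact ⟨A, mem_iUnion.2 ⟨i, hA⟩, hxA⟩
  · simp only [mem_iUnion]
    rintro A ⟨i, hA⟩
    refine ⟨D i, subset_iUnion D i, (hD i).1, ?_, fun B hB => ?_⟩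
    · rw [(hD i).image_eq_s9 hA, (hD i).2.1]
    · rw [(hD i).image_eq_s9 hA, (hD i).image_eq_s9 hB]

namespace Bundle.Trivialization

variable {F : Type*} [TopologicalSpace F] (t : Trivialization F p)

def sheet (W : Set Y) (i : F) : Set X := t.source ∩ t ⁻¹' (W ×ˢ {i})

variable {t} {W : Set Y}

theorem image_sheet (hWt : W ⊆ t.baseSet) (i : F) : t '' t.sheet W i = W ×ˢ {i} := by
  rw [sheet, ← t.coe_coe, t.image_source_inter_eq', t.target_inter_inv_preimage_preimage,
    inter_eq_right, t.target_eq]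
  exact prod_mono hWt (subset_univ _)

theorem restrictsToHomeo_sheet (hWt : W ⊆ t.baseSet) (i : F) :
    RestrictsToHomeo p (t.sheet W i) W := by
  have hs : t.sheet W i ⊆ t.source := inter_subset_left
  refine ⟨(t.homeomorphOfImageSubsetSource hs (image_sheet hWt i)).trans
    ((Homeomorph.Set.prod W {i}).trans (Homeomorph.prodUnique _ _)), fun u => ?_⟩
  exact t.coe_fst (hs u.2)

theorem isOpen_sheet [DiscreteTopology F] (hW : IsOpen W) (i : F) : IsOpen (t.sheet W i) :=
  t.continuousOn_toFun.isOpen_inter_preimage t.open_source (hW.prod (isOpen_discrete _))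

theorem iUnion_sheet (hWt : W ⊆ t.baseSet) : ⋃ i, t.sheet W i = p ⁻¹' W := by
  ext x
  simp only [sheet, mem_iUnion, mem_inter_iff, mem_preimage, mem_prod, mem_singleton_iff]
  refine ⟨fun ⟨i, hx, hW, _⟩ => t.coe_fst hx ▸ hW, fun hx => ⟨(t x).2, ?_, ?_, rfl⟩⟩
  · exact t.mem_source.2 (hWt hx)
  · rwa [t.coe_fst' (hWt hx)]

theorem isSheetPartition_range_sheet [DiscreteTopology F] (hW : IsOpen W)
    (hWt : W ⊆ t.baseSet) : IsSheetPartition p W (range (t.sheet W)) := by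
  refine ⟨pairwiseDisjoint_range_iff.2 fun i j hij => ?_, by rw [sUnion_range, iUnion_sheet hWt],
    forall_mem_range.2 fun i => ⟨isOpen_sheet hW i, restrictsToHomeo_sheet hWt i⟩⟩
  exact disjoint_left.2 fun x hi hj => hij (congrArg _ (hi.2.2.symm.trans hj.2.2))

theorem exists_sheet_subset_of_sUnion_eq_univ [Finite F] {𝒱 : Set (Set X)}
    (hopen : ∀ V ∈ 𝒱, IsOpen V) (hcov : ⋃₀ 𝒱 = univ) {y : Y} (hy : y ∈ t.baseSet) :
    ∃ W, IsOpen W ∧ y ∈ W ∧ W ⊆ t.baseSet ∧ ∀ i, ∃ V ∈ 𝒱, t.sheet W i ⊆ V := by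
  have hV : ∀ i : F, ∃ V ∈ 𝒱, t.toOpenPartialHomeomorph.symm (y, i) ∈ V := fun i =>
    mem_sUnion.1 (hcov ▸ mem_univ (t.toOpenPartialHomeomorph.symm (y, i)))
  choose V hV𝒱 hyV using hV
  refine ⟨t.baseSet ∩ ⋂ i, t.baseSet ∩ (fun w => t.toOpenPartialHomeomorph.symm (w, i)) ⁻¹' V i,
    ?_, ⟨hy, mem_iInter.2 fun i => ⟨hy, hyV i⟩⟩, inter_subset_left, fun i => ⟨V i, hV𝒱 i, ?_⟩⟩
  · exact t.open_baseSet.inter (isOpen_iInter_of_finite fun i =>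
      t.continuousOn_symm_prodMk_left.isOpen_inter_preimage t.open_baseSet (hopen _ (hV𝒱 i)))
  · rintro x ⟨hx, ⟨-, hW⟩, rfl : (t x).2 = i⟩
    have hxV := (mem_iInter.1 hW (t x).2).2
    rwa [mem_preimage, Prod.mk.eta, ← t.coe_coe, t.left_inv hx] at hxV

end Bundle.Trivialization

theorem IsCoveringMap.exists_isSheetPartition_subset (hp : IsCoveringMap p) {y : Y}
    (hfin : (p ⁻¹' {y}).Finite) {𝒱 : Set (Set X)} (hopen : ∀ V ∈ 𝒱, IsOpen V)
    (hcov : ⋃₀ 𝒱 = univ) :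
    ∃ W D, y ∈ W ∧ IsSheetPartition p W D ∧ ∀ A ∈ D, ∃ V ∈ 𝒱, A ⊆ V := by
  rcases isEmpty_or_nonempty (p ⁻¹' {y}) with hempty | hne
  · obtain ⟨-, U, hyU, -, -, H, -⟩ := hp y
    refine ⟨U, ∅, hyU, .of_preimage_eq_empty ?_, fun _ h => h.elim⟩
    exact eq_empty_iff_forall_notMem.2 fun x hx => hempty.elim (H ⟨x, hx⟩).2
  · have := (hp y).1
    have := hfin.to_subtype
    let t := (hp y).toTrivialization
    obtain ⟨W, hW, hyW, hWt, hsub⟩ :=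
      t.exists_sheet_subset_of_sUnion_eq_univ hopen hcov (hp y).mem_toTrivialization_baseSet
    exact ⟨W, range (t.sheet W), hyW, t.isSheetPartition_range_sheet hW hWt,
      forall_mem_range.2 hsub⟩

end

theorem exists_covering_structure_refinement_general
    {X Y : Type*} [TopologicalSpace X] [TopologicalSpace Y]
    (p : X → Y) (hp : IsCoveringMap p)
    (hfin : ∀ y : Y, (p ⁻¹' {y}).Finite)
    (𝒱 : Set (Set X)) (hopen : ∀ V ∈ 𝒱, IsOpen V) (hcov : ⋃₀ 𝒱 = Set.univ) :
    ∃ S : Set (Set X), IsCoveringStructure p S ∧ ∀ A ∈ S, ∃ V ∈ 𝒱, A ⊆ V := by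
  choose W D hyW hD hsub using fun y => hp.exists_isSheetPartition_subset (hfin y) hopen hcov
  refine ⟨⋃ y, D y, isCoveringStructure_iUnion hD fun y => ⟨y, hyW y⟩, ?_⟩
  simp only [mem_iUnion]
  rintro A ⟨y, hA⟩
  exact hsub y A hA

/-- If `p : X → Y` is a covering map with finite fibers and `X` is Hausdorff, then any
open cover `𝒱` of `X` can be refined by a covering structure of `p`. -/
theorem exists_covering_structure_refinement
    {X Y : Type*} [TopologicalSpace X] [TopologicalSpace Y] [T2Space X]
    (p : X → Y) (hp : IsCoveringMap p)
    (hfin : ∀ y : Y, (p ⁻¹' {y}).Finite)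
    (𝒱 : Set (Set X)) (hopen : ∀ V ∈ 𝒱, IsOpen V) (hcov : ⋃₀ 𝒱 = Set.univ) :
    ∃ S : Set (Set X), IsCoveringStructure p S ∧ ∀ A ∈ S, ∃ V ∈ 𝒱, A ⊆ V :=
  exists_covering_structure_refinement_general p hp hfin 𝒱 hopen hcov
end

section
/- If p : X → Y is a covering map with finite fibers and X is paracompact (and Hausdorff), then p is an overlay. -/
/-!
Cover `X` by the sheets of `p` over evenly covered open sets and take a barycentric refinement
`{N w}` of this cover, which exists since `X` is paracompact Hausdorff. Over each `y`, shrink the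
evenly covered neighbourhood to an open `B y` such that each of the finitely many sheets over
`B y` lies in `N w` for its point `w` over `y`; finiteness of the fibre is what keeps `B y` open.
These shrunk sheets form a covering structure, and the star of a point `x` is a union of sets
`N w` containing `x`, hence lies in a single sheet of the original cover, so it is a slice.
-/

open Set Pointwise

section Sheets

variable {X Y : Type*} [TopologicalSpace X] {p : X → Y}

structure IsSheetFamily {ι : Type*} (p : X → Y) (E : Set Y) (T : ι → Set X) : Prop where
  isOpen : ∀ i, IsOpen (T i)
  injOn : ∀ i, InjOn p (T i)
  image_eq : ∀ i, p '' T i = E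
  pairwise_disjoint : Pairwise fun i j => Disjoint (T i) (T j)
  iUnion_eq : ⋃ i, T i = p ⁻¹' E

namespace IsSheetFamily

variable {ι : Type*} {E : Set Y} {T : ι → Set X}

lemma exists_mem (h : IsSheetFamily p E T) {x : X} (hx : p x ∈ E) : ∃ i, x ∈ T i :=
  mem_iUnion.1 (h.iUnion_eq ▸ hx)

lemma exists_mem_fiber (h : IsSheetFamily p E T) {y : Y} (hy : y ∈ E) (i : ι) :
    ∃ x ∈ T i, p x = y := by
  rwa [← h.image_eq i] at hy

lemma pairwiseDisjoint_range (h : IsSheetFamily p E T) : (range T).PairwiseDisjoint id :=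
  pairwiseDisjoint_range_iff.2 fun _ _ hij => h.pairwise_disjoint (ne_of_apply_ne T hij)

lemma sUnion_range (h : IsSheetFamily p E T) (i : ι) : ⋃₀ range T = p ⁻¹' (p '' T i) := by
  rw [Set.sUnion_range, h.iUnion_eq, h.image_eq]

end IsSheetFamily

variable [TopologicalSpace Y]

lemma restrictsToHomeo_image (hc : Continuous p) (ho : IsOpenMap p) {T : Set X} (hT : IsOpen T)
    (hinj : InjOn p T) : RestrictsToHomeo p T (p '' T) :=
  have he : Topology.IsOpenEmbedding (T.domRestrict p) :=
    .of_continuous_injective_isOpenMap (hc.comp continuous_subtype_val) hinj.injective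
      (ho.domRestrict hT)
  ⟨he.toIsEmbedding.toHomeomorph.trans (.setCongr (range_domRestrict p T)), fun _ => rfl⟩

lemma IsEvenlyCovered.exists_isSheetFamily {I : Type*} [TopologicalSpace I] {y : Y}
    (h : IsEvenlyCovered p y I) :
    ∃ (E : Set Y) (T : I → Set X), IsOpen E ∧ y ∈ E ∧ IsSheetFamily p E T := by
  obtain ⟨_, E, hyE, hE, hpE, H, hH⟩ := h
  have hHsnd : Continuous fun e => (H e).2 := continuous_snd.comp H.continuous
  refine ⟨E, fun i => Subtype.val '' ((fun e => (H e).2) ⁻¹' {i}), hE, hyE,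
    ?_, ?_, ?_, ?_, ?_⟩
  · exact fun i => hpE.isOpenMap_subtype_val _ ((isOpen_discrete {i}).preimage hHsnd)
  · rintro i _ ⟨e, he, rfl⟩ _ ⟨e', he', rfl⟩ hee'
    refine congrArg Subtype.val (H.injective (Prod.ext (Subtype.ext ?_) (he.trans he'.symm)))
    rw [hH, hH, hee']
  · intro i
    refine Subset.antisymm (by rintro _ ⟨_, ⟨e, -, rfl⟩, rfl⟩; exact e.2) fun y hy => ?_
    refine ⟨H.symm (⟨y, hy⟩, i), ⟨_, by simp, rfl⟩, ?_⟩
    rw [← hH, H.apply_symm_apply]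
  · intro i j hij
    refine disjoint_left.2 ?_
    rintro _ ⟨e, he, rfl⟩ ⟨e', he', hee'⟩
    exact hij (he.symm.trans (Subtype.ext hee' ▸ he'))
  · refine Subset.antisymm (iUnion_subset fun i => ?_) fun x hx => ?_
    · rintro _ ⟨e, -, rfl⟩
      exact e.2
    · exact mem_iUnion.2 ⟨(H ⟨x, hx⟩).2, ⟨x, hx⟩, rfl, rfl⟩

namespace IsSheetFamily

variable {ι : Type*} {E : Set Y} {T : ι → Set X}

lemma restrict (h : IsSheetFamily p E T) (hc : Continuous p) {B : Set Y} (hB : IsOpen B)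
    (hBE : B ⊆ E) : IsSheetFamily p B fun i => T i ∩ p ⁻¹' B where
  isOpen i := (h.isOpen i).inter (hB.preimage hc)
  injOn i := (h.injOn i).mono inter_subset_left
  image_eq i := by rw [image_inter_preimage, h.image_eq, inter_eq_right.2 hBE]
  pairwise_disjoint i j hij := (h.pairwise_disjoint hij).mono inter_subset_left inter_subset_left
  iUnion_eq := by rw [← iUnion_inter, h.iUnion_eq, ← preimage_inter, inter_eq_right.2 hBE]

lemma isSlice (h : IsSheetFamily p E T) (hc : Continuous p) (ho : IsOpenMap p) (i : ι) :
    IsSlice p (T i) := by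
  refine ⟨h.isOpen i, range T, mem_range_self i, forall_mem_range.2 h.isOpen,
    h.pairwiseDisjoint_range, h.sUnion_range i, forall_mem_range.2 fun k => ?_⟩
  rw [h.image_eq i, ← h.image_eq k]
  exact restrictsToHomeo_image hc ho (h.isOpen k) (h.injOn k)

lemma isSlice_of_subset (h : IsSheetFamily p E T) (hc : Continuous p) (ho : IsOpenMap p)
    {A : Set X} (hA : IsOpen A) {i : ι} (hAT : A ⊆ T i) : IsSlice p A := by
  have hAeq : T i ∩ p ⁻¹' (p '' A) = A := by
    refine Subset.antisymm ?_ (subset_inter hAT (subset_preimage_image p A))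
    rintro x ⟨hxT, a, ha, hax⟩
    rwa [← h.injOn i (hAT ha) hxT hax]
  have hAE : p '' A ⊆ E := h.image_eq i ▸ image_mono hAT
  simpa only [hAeq] using (h.restrict hc (ho A hA) hAE).isSlice hc ho i

lemma exists_isOpen_sheets_subset_nhds [Finite ι] (h : IsSheetFamily p E T)
    (ho : IsOpenMap p) (hE : IsOpen E) {y : Y} (hy : y ∈ E) {N : X → Set X}
    (hN : ∀ x, IsOpen (N x)) (hxN : ∀ x, x ∈ N x) :
    ∃ B : Set Y, IsOpen B ∧ y ∈ B ∧ B ⊆ E ∧ ∀ i, ∃ x, T i ∩ p ⁻¹' B ⊆ N x := by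
  choose c hcT hcy using h.exists_mem_fiber hy
  refine ⟨E ∩ ⋂ i, p '' (T i ∩ N (c i)),
    hE.inter (isOpen_iInter_of_finite fun i => ho _ ((h.isOpen i).inter (hN _))),
    ⟨hy, mem_iInter.2 fun i => ⟨c i, ⟨hcT i, hxN _⟩, hcy i⟩⟩, inter_subset_left,
    fun i => ⟨c i, ?_⟩⟩
  rintro x ⟨hxT, -, hxB⟩
  obtain ⟨x', ⟨hx'T, hx'N⟩, hpx'⟩ := mem_iInter.1 hxB i
  rwa [h.injOn i hxT hx'T hpx'.symm]

end IsSheetFamily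

lemma isCoveringStructure_iUnion_range {Z : Type*} {ι : Z → Type*} {E : Z → Set Y}
    {T : ∀ z, ι z → Set X} (hc : Continuous p) (ho : IsOpenMap p)
    (hT : ∀ z, IsSheetFamily p (E z) (T z)) (hcov : ∀ x, ∃ z i, x ∈ T z i) :
    IsCoveringStructure p (⋃ z, range (T z)) := by
  refine ⟨?_, eq_univ_of_forall fun x => ?_, ?_⟩
  · simp only [mem_iUnion, mem_range]
    rintro _ ⟨z, i, rfl⟩
    exact (hT z).isSlice hc ho i
  · obtain ⟨z, i, hx⟩ := hcov x
    exact ⟨T z i, mem_iUnion.2 ⟨z, mem_range_self i⟩, hx⟩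
  · simp only [mem_iUnion, mem_range]
    rintro _ ⟨z, i, rfl⟩
    exact ⟨range (T z), subset_iUnion (fun z => range (T z)) z, (hT z).pairwiseDisjoint_range,
      (hT z).sUnion_range i, forall_mem_range.2 fun k => by rw [(hT z).image_eq, (hT z).image_eq]⟩

end Sheets

section BarycentricRefinement

variable {X : Type*} [TopologicalSpace X]

lemma LocallyFinite.exists_isOpen_nhds_subset_of_inter_nonempty {ι : Type*} {F G : ι → Set X}
    (hF : LocallyFinite F) (hFc : ∀ j, IsClosed (F j)) (hG : ∀ j, IsOpen (G j))
    (hFG : ∀ j, F j ⊆ G j) :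
    ∃ N : X → Set X, (∀ w, IsOpen (N w)) ∧ (∀ w, w ∈ N w) ∧
      ∀ w j, (N w ∩ F j).Nonempty → N w ⊆ G j := by
  refine ⟨fun w => (⋂ j ∈ {j | w ∈ F j}, G j) \ ⋃ j ∈ {j | w ∉ F j}, F j, fun w => ?_,
    fun w => ⟨mem_iInter₂.2 fun j hj => hFG j hj, ?_⟩, fun w j ⟨q, hqN, hqF⟩ => ?_⟩
  · refine ((hF.point_finite w).isOpen_biInter fun j _ => hG j).sdiff ?_
    rw [biUnion_eq_iUnion]
    exact (hF.comp_injective Subtype.val_injective).isClosed_iUnion fun j => hFc j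
  · intro hw
    obtain ⟨j, hwj, hw⟩ := mem_iUnion₂.1 hw
    exact hwj hw
  · by_cases hw : w ∈ F j
    · exact fun t ht => mem_iInter₂.1 ht.1 j hw
    · exact absurd (mem_iUnion₂.2 ⟨j, hw, hqF⟩) hqN.2

theorem exists_barycentric_refinement [NormalSpace X] [ParacompactSpace X] {ι : Type*}
    {O : ι → Set X} (hO : ∀ i, IsOpen (O i)) (hcov : ⋃ i, O i = univ) :
    ∃ N : X → Set X, (∀ w, IsOpen (N w)) ∧ (∀ w, w ∈ N w) ∧
      ∀ x, ∃ i, ∀ w, x ∈ N w → N w ⊆ O i := by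
  obtain ⟨G, hGo, hGcov, hGlf, hGO⟩ := precise_refinement O hO hcov
  obtain ⟨V, hVcov, -, hVG⟩ := exists_subset_iUnion_closure_subset isClosed_univ hGo
    (fun x _ => hGlf.point_finite x) hGcov.ge
  obtain ⟨N, hNo, hwN, hNG⟩ := (hGlf.subset hVG).exists_isOpen_nhds_subset_of_inter_nonempty
    (fun j => isClosed_closure) hGo hVG
  refine ⟨N, hNo, hwN, fun x => ?_⟩
  obtain ⟨j, hj⟩ := mem_iUnion.1 (hVcov (mem_univ x))
  exact ⟨j, fun w hxw => (hNG w j ⟨x, hxw, subset_closure hj⟩).trans (hGO j)⟩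

end BarycentricRefinement

/-- If `p : X → Y` is a covering map with finite fibers and `X` is paracompact and
Hausdorff, then `p` is an overlay. -/
theorem finite_fibered_covering_of_paracompact_is_overlay
    {X Y : Type*} [TopologicalSpace X] [TopologicalSpace Y]
    [T2Space X] [ParacompactSpace X]
    (p : X → Y) (hp : IsCoveringMap p)
    (hfin : ∀ y : Y, (p ⁻¹' {y}).Finite) :
    IsOverlay p := by
  have hc := hp.continuous
  have ho := hp.isOpenMap
  choose E T hEo hyE hT using fun y => (hp y).exists_isSheetFamily
  have hsheets : ⋃ j : Σ y, p ⁻¹' {y}, T j.1 j.2 = univ := eq_univ_of_forall fun x =>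
    have ⟨i, hi⟩ := (hT (p x)).exists_mem (hyE (p x))
    mem_iUnion.2 ⟨⟨p x, i⟩, hi⟩
  obtain ⟨N, hNo, hwN, hNT⟩ :=
    exists_barycentric_refinement (fun j : Σ y, p ⁻¹' {y} => (hT j.1).isOpen j.2) hsheets
  choose B hBo hyB hBE hBN using fun y =>
    have := (hfin y).to_subtype
    (hT y).exists_isOpen_sheets_subset_nhds ho (hEo y) (hyE y) hNo hwN
  have hΛ : ∀ y, IsSheetFamily p (B y) fun i => T y i ∩ p ⁻¹' B y :=
    fun y => (hT y).restrict hc (hBo y) (hBE y)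
  refine ⟨_, isCoveringStructure_iUnion_range hc ho hΛ fun x =>
    ⟨p x, (hΛ (p x)).exists_mem (hyB (p x))⟩, fun x => ?_⟩
  obtain ⟨⟨y, i⟩, hi⟩ := hNT x
  refine (hT y).isSlice_of_subset hc ho (isOpen_sUnion ?_) (i := i) ?_
  · simp only [mem_ofPred_eq, mem_iUnion, mem_range]
    rintro _ ⟨⟨z, k, rfl⟩, -⟩
    exact (hΛ z).isOpen k
  · rintro t ⟨_, ⟨hU, hxU⟩, htU⟩
    obtain ⟨z, k, rfl⟩ : ∃ z k, T z k ∩ p ⁻¹' B z = _ := by simpa using hU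
    obtain ⟨w, hw⟩ := hBN z k
    exact hi w (hw hxU) (hw htU)
end

section
/- Let X and Y be metric spaces and p : X → Y a surjective map such that for some r > 0, p restricts to an isometry of the open ball B(x, r) onto the open ball B(p(x), r) for every x ∈ X. Then p is an overlay; indeed the family {B(x, r/3) : x ∈ X} is an overlay structure of p. -/
open Set Pointwise

section Aux

variable {X Y : Type*} [MetricSpace X] [MetricSpace Y] {p : X → Y} {r : ℝ}

/-- A bijective isometric restriction is a restriction to a homeomorphism. -/
lemma restrictsToHomeo_of_isometry (W : Set X) (V : Set Y)
    (hmaps : ∀ a ∈ W, p a ∈ V) (hsurj : ∀ y ∈ V, ∃ a ∈ W, p a = y)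
    (hdist : ∀ a ∈ W, ∀ b ∈ W, dist (p a) (p b) = dist a b) :
    RestrictsToHomeo p W V := by
  have hisom : Isometry (fun a : W => (⟨p a, hmaps a a.2⟩ : V)) :=
    Isometry.of_dist_eq fun a b => by
      simp only [Subtype.dist_eq]
      exact hdist a a.2 b b.2
  have hbij : Function.Bijective (fun a : W => (⟨p a, hmaps a a.2⟩ : V)) := by
    refine ⟨hisom.injective, fun y => ?_⟩
    obtain ⟨a, ha, hpa⟩ := hsurj y y.2
    exact ⟨⟨a, ha⟩, Subtype.ext hpa⟩
  exact ⟨(IsometryEquiv.mk (Equiv.ofBijective _ hbij) hisom).toHomeomorph, fun u => rfl⟩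

lemma dist_map (hr : 0 < r)
    (hiso : ∀ x : X, ∀ a ∈ Metric.ball x r, ∀ b ∈ Metric.ball x r,
      dist (p a) (p b) = dist a b)
    {x a : X} (ha : dist a x < r) : dist (p a) (p x) = dist a x :=
  hiso x a (Metric.mem_ball.mpr ha) x (Metric.mem_ball_self hr)

lemma fiber_eq (hr : 0 < r)
    (hiso : ∀ x : X, ∀ a ∈ Metric.ball x r, ∀ b ∈ Metric.ball x r,
      dist (p a) (p b) = dist a b)
    {a x' x'' : X} (h : p x' = p x'') (h1 : dist x' a < r) (h2 : dist x'' a < r) :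
    x' = x'' := by
  have := hiso a x' (Metric.mem_ball.mpr h1) x'' (Metric.mem_ball.mpr h2)
  rw [h, dist_self] at this
  exact eq_of_dist_eq_zero this.symm

lemma image_ball' (hr : 0 < r)
    (honto : ∀ x : X, p '' Metric.ball x r = Metric.ball (p x) r)
    (hiso : ∀ x : X, ∀ a ∈ Metric.ball x r, ∀ b ∈ Metric.ball x r,
      dist (p a) (p b) = dist a b)
    (x : X) {s : ℝ} (hs : s ≤ r) :
    p '' Metric.ball x s = Metric.ball (p x) s := by
  ext y
  constructor
  · rintro ⟨a, ha, rfl⟩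
    rw [Metric.mem_ball] at ha ⊢
    rw [dist_map hr hiso (lt_of_lt_of_le ha hs)]
    exact ha
  · intro hy
    have hy' : y ∈ Metric.ball (p x) r :=
      Metric.mem_ball.mpr (lt_of_lt_of_le (Metric.mem_ball.mp hy) hs)
    rw [← honto x] at hy'
    obtain ⟨a, ha, rfl⟩ := hy'
    refine ⟨a, ?_, rfl⟩
    rw [Metric.mem_ball, ← dist_map hr hiso (Metric.mem_ball.mp ha)]
    exact Metric.mem_ball.mp hy

lemma lift_pt (hr : 0 < r)
    (honto : ∀ x : X, p '' Metric.ball x r = Metric.ball (p x) r)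
    (hiso : ∀ x : X, ∀ a ∈ Metric.ball x r, ∀ b ∈ Metric.ball x r,
      dist (p a) (p b) = dist a b)
    {a x : X} {s : ℝ} (hs : s ≤ r) (h : dist (p x) (p a) < s) :
    ∃ x', p x' = p x ∧ dist x' a < s := by
  have h1 : p x ∈ p '' Metric.ball a s := by
    rw [image_ball' hr honto hiso a hs]
    exact Metric.mem_ball.mpr h
  obtain ⟨x', hx', hpx'⟩ := h1
  exact ⟨x', hpx', Metric.mem_ball.mp hx'⟩

lemma mem_st_iff_s11 {x a : X} :
    a ∈ st x {U : Set X | ∃ z : X, U = Metric.ball z (r / 3)} ↔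
    ∃ z, x ∈ Metric.ball z (r / 3) ∧ a ∈ Metric.ball z (r / 3) := by
  simp only [st, Set.mem_sUnion, Set.mem_setOf_eq]
  constructor
  · rintro ⟨U, ⟨⟨z, rfl⟩, hx⟩, ha⟩
    exact ⟨z, hx, ha⟩
  · rintro ⟨z, hx, ha⟩
    exact ⟨_, ⟨⟨z, rfl⟩, hx⟩, ha⟩

lemma st_subset (hr : 0 < r) {x : X} :
    st x {U : Set X | ∃ z : X, U = Metric.ball z (r / 3)} ⊆ Metric.ball x r := by
  intro a ha
  obtain ⟨z, hx, haz⟩ := mem_st_iff_s11.mp ha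
  rw [Metric.mem_ball] at hx haz ⊢
  have := dist_triangle a z x
  have hzx : dist z x < r / 3 := by rwa [dist_comm] at hx
  linarith

lemma image_st_subset (hr : 0 < r)
    (honto : ∀ x : X, p '' Metric.ball x r = Metric.ball (p x) r)
    (hiso : ∀ x : X, ∀ a ∈ Metric.ball x r, ∀ b ∈ Metric.ball x r,
      dist (p a) (p b) = dist a b)
    {x x' : X} (hx' : p x' = p x) :
    p '' st x {U : Set X | ∃ z : X, U = Metric.ball z (r / 3)} ⊆
    p '' st x' {U : Set X | ∃ z : X, U = Metric.ball z (r / 3)} := by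
  have h3 : r / 3 ≤ r := by linarith
  rintro _ ⟨t, ht, rfl⟩
  obtain ⟨z, hxz, htz⟩ := mem_st_iff_s11.mp ht
  rw [Metric.mem_ball] at hxz htz
  have h1 : dist (p z) (p x') < r / 3 := by
    rw [hx', dist_comm, dist_map hr hiso (lt_of_lt_of_le hxz h3)]
    exact hxz
  obtain ⟨z', hz', hz'x'⟩ := lift_pt hr honto hiso h3 h1
  have h2 : p t ∈ Metric.ball (p z') (r / 3) := by
    rw [Metric.mem_ball, hz', dist_map hr hiso (lt_of_lt_of_le htz h3)]
    exact htz
  rw [← image_ball' hr honto hiso z' h3] at h2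
  obtain ⟨t', ht', hpt'⟩ := h2
  refine ⟨t', mem_st_iff_s11.mpr ⟨z', ?_, ht'⟩, hpt'⟩
  rw [Metric.mem_ball, dist_comm]
  exact hz'x'

lemma image_st_eq (hr : 0 < r)
    (honto : ∀ x : X, p '' Metric.ball x r = Metric.ball (p x) r)
    (hiso : ∀ x : X, ∀ a ∈ Metric.ball x r, ∀ b ∈ Metric.ball x r,
      dist (p a) (p b) = dist a b)
    {x x' : X} (hx' : p x' = p x) :
    p '' st x' {U : Set X | ∃ z : X, U = Metric.ball z (r / 3)} =
    p '' st x {U : Set X | ∃ z : X, U = Metric.ball z (r / 3)} :=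
  Set.Subset.antisymm (image_st_subset hr honto hiso hx'.symm)
    (image_st_subset hr honto hiso hx')

lemma preimage_st (hr : 0 < r)
    (honto : ∀ x : X, p '' Metric.ball x r = Metric.ball (p x) r)
    (hiso : ∀ x : X, ∀ a ∈ Metric.ball x r, ∀ b ∈ Metric.ball x r,
      dist (p a) (p b) = dist a b)
    (x : X) :
    p ⁻¹' (p '' st x {U : Set X | ∃ z : X, U = Metric.ball z (r / 3)}) =
    ⋃₀ {W | ∃ x', p x' = p x ∧
      W = st x' {U : Set X | ∃ z : X, U = Metric.ball z (r / 3)}} := by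
  have h3 : r / 3 ≤ r := by linarith
  ext a
  simp only [Set.mem_preimage, Set.mem_sUnion, Set.mem_setOf_eq]
  constructor
  · rintro ⟨t, ht, hpt⟩
    obtain ⟨z, hxz, htz⟩ := mem_st_iff_s11.mp ht
    rw [Metric.mem_ball] at hxz htz
    have h1 : dist (p z) (p a) < r / 3 := by
      rw [← hpt, dist_comm, dist_map hr hiso (lt_of_lt_of_le htz h3)]
      exact htz
    obtain ⟨z', hz', hz'a⟩ := lift_pt hr honto hiso h3 h1
    have h2 : p x ∈ Metric.ball (p z') (r / 3) := by
      rw [Metric.mem_ball, hz', dist_map hr hiso (lt_of_lt_of_le hxz h3)]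
      exact hxz
    rw [← image_ball' hr honto hiso z' h3] at h2
    obtain ⟨x', hx'z', hpx'⟩ := h2
    refine ⟨_, ⟨x', hpx', rfl⟩, mem_st_iff_s11.mpr ⟨z', hx'z', ?_⟩⟩
    rw [Metric.mem_ball, dist_comm]
    exact hz'a
  · rintro ⟨W, ⟨x', hpx', rfl⟩, haW⟩
    exact image_st_subset hr honto hiso hpx'.symm ⟨a, haW, rfl⟩

end Aux

/-- Let `X` and `Y` be metric spaces and `p : X → Y` a surjective map such that for some
`r > 0`, `p` restricts to an isometry of the open ball `B(x, r)` onto the open ball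
`B(p x, r)` for every `x ∈ X`.  Then `p` is an overlay; indeed the family
`{B(x, r/3) : x ∈ X}` is an overlay structure of `p`. -/
theorem local_isometry_is_overlay
    {X Y : Type*} [MetricSpace X] [MetricSpace Y]
    (p : X → Y) (hc : Continuous p) (hs : Function.Surjective p)
    (r : ℝ) (hr : 0 < r)
    (honto : ∀ x : X, p '' Metric.ball x r = Metric.ball (p x) r)
    (hiso : ∀ x : X, ∀ a ∈ Metric.ball x r, ∀ b ∈ Metric.ball x r,
      dist (p a) (p b) = dist a b) :
    IsOverlayStructure p {U : Set X | ∃ x : X, U = Metric.ball x (r / 3)} ∧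
    IsOverlay p := by
  set S : Set (Set X) := {U : Set X | ∃ x : X, U = Metric.ball x (r / 3)} with hS
  have h3 : r / 3 ≤ r := by linarith
  have h3pos : 0 < r / 3 := by linarith
  -- disjointness of distinct fiber balls
  have ball_disj : ∀ {x' x'' : X}, p x' = p x'' → x' ≠ x'' →
      Disjoint (Metric.ball x' (r / 3)) (Metric.ball x'' (r / 3)) := by
    intro x' x'' h hne
    rw [Set.disjoint_left]
    intro a ha1 ha2
    rw [Metric.mem_ball] at ha1 ha2
    exact hne (fiber_eq hr hiso h (by rw [dist_comm]; linarith) (by rw [dist_comm]; linarith))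
  -- disjointness of distinct fiber stars
  have st_disj : ∀ {x' x'' : X}, p x' = p x'' → x' ≠ x'' →
      Disjoint (st x' S) (st x'' S) := by
    intro x' x'' h hne
    rw [Set.disjoint_left]
    intro a ha1 ha2
    have d1 : dist x' a < r := by
      have := Metric.mem_ball.mp (st_subset hr ha1); rwa [dist_comm]
    have d2 : dist x'' a < r := by
      have := Metric.mem_ball.mp (st_subset hr ha2); rwa [dist_comm]
    exact hne (fiber_eq hr hiso h d1 d2)
  -- slice structure for balls
  have ball_decomp : ∀ x : X, ∃ D ⊆ S,
      Metric.ball x (r / 3) ∈ D ∧ (∀ W ∈ D, IsOpen W) ∧ D.PairwiseDisjoint id ∧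
      ⋃₀ D = p ⁻¹' (p '' Metric.ball x (r / 3)) ∧
      (∀ W ∈ D, p '' W = p '' Metric.ball x (r / 3)) := by
    intro x
    refine ⟨{W | ∃ x', p x' = p x ∧ W = Metric.ball x' (r / 3)}, ?_, ⟨x, rfl, rfl⟩,
      ?_, ?_, ?_, ?_⟩
    · rintro W ⟨x', _, rfl⟩; exact ⟨x', rfl⟩
    · rintro W ⟨x', _, rfl⟩; exact Metric.isOpen_ball
    · rintro W₁ ⟨x₁, h₁, rfl⟩ W₂ ⟨x₂, h₂, rfl⟩ hne
      have hx : x₁ ≠ x₂ := by rintro rfl; exact hne rfl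
      exact ball_disj (h₁.trans h₂.symm) hx
    · rw [image_ball' hr honto hiso x h3]
      ext a
      simp only [Set.mem_sUnion, Set.mem_setOf_eq, Set.mem_preimage]
      constructor
      · rintro ⟨W, ⟨x', hpx', rfl⟩, ha⟩
        rw [Metric.mem_ball] at ha
        rw [Metric.mem_ball, ← hpx', dist_map hr hiso (lt_of_lt_of_le ha h3)]
        exact ha
      · intro ha
        rw [Metric.mem_ball] at ha
        obtain ⟨x', hpx', hd⟩ := lift_pt hr honto hiso h3 (by rwa [dist_comm] at ha)
        refine ⟨_, ⟨x', hpx', rfl⟩, Metric.mem_ball.mpr ?_⟩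
        rwa [dist_comm]
    · rintro W ⟨x', hpx', rfl⟩
      rw [image_ball' hr honto hiso x' h3, image_ball' hr honto hiso x h3, hpx']
  -- every ball of radius r/3 is a slice
  have ball_slice : ∀ x : X, IsSlice p (Metric.ball x (r / 3)) := by
    intro x
    obtain ⟨D, hDS, hmem, hop, hpd, huni, himg⟩ := ball_decomp x
    refine ⟨Metric.isOpen_ball, D, hmem, hop, hpd, huni, fun W hW => ?_⟩
    refine restrictsToHomeo_of_isometry W _ (fun a ha => ?_) (fun y hy => ?_) ?_
    · rw [← himg W hW]; exact ⟨a, ha, rfl⟩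
    · rw [← himg W hW] at hy; exact hy
    · obtain ⟨x', _, rfl⟩ := hDS hW  -- W ∈ S so W is a ball
      intro a ha b hb
      rw [Metric.mem_ball] at ha hb
      exact hiso x' a (Metric.mem_ball.mpr (lt_of_lt_of_le ha h3))
        b (Metric.mem_ball.mpr (lt_of_lt_of_le hb h3))
  -- every star is a slice
  have star_slice : ∀ x : X, IsSlice p (st x S) := by
    intro x
    have stopen : ∀ x' : X, IsOpen (st x' S) := by
      intro x'
      refine isOpen_sUnion ?_
      rintro U ⟨⟨z, rfl⟩, -⟩
      exact Metric.isOpen_ball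
    refine ⟨stopen x, {W | ∃ x', p x' = p x ∧ W = st x' S}, ⟨x, rfl, rfl⟩,
      ?_, ?_, (preimage_st hr honto hiso x).symm, ?_⟩
    · rintro W ⟨x', _, rfl⟩; exact stopen x'
    · rintro W₁ ⟨x₁, h₁, rfl⟩ W₂ ⟨x₂, h₂, rfl⟩ hne
      have hx : x₁ ≠ x₂ := by rintro rfl; exact hne rfl
      exact st_disj (h₁.trans h₂.symm) hx
    · rintro W ⟨x', hpx', rfl⟩
      have himg := image_st_eq hr honto hiso hpx'
      refine restrictsToHomeo_of_isometry _ _ (fun a ha => ?_) (fun y hy => ?_) ?_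
      · rw [← himg]; exact ⟨a, ha, rfl⟩
      · rw [← himg] at hy; exact hy
      · intro a ha b hb
        exact hiso x' a (st_subset hr ha) b (st_subset hr hb)
  have hstruct : IsOverlayStructure p S := by
    refine ⟨⟨?_, ?_, ?_⟩, star_slice⟩
    · rintro U ⟨x, rfl⟩; exact ball_slice x
    · ext a
      simp only [Set.mem_univ, iff_true, Set.mem_sUnion]
      exact ⟨Metric.ball a (r / 3), ⟨a, rfl⟩, Metric.mem_ball_self h3pos⟩
    · rintro U ⟨x, rfl⟩
      obtain ⟨D, hDS, _, _, hpd, huni, himg⟩ := ball_decomp x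
      exact ⟨D, hDS, hpd, huni, himg⟩
  exact ⟨hstruct, S, hstruct⟩
end

section
/- Every overlay structure arising from an overlay action of a group G on a space X is regular: for the quotient map p : X → X/G with overlay structure S consisting of slices of the action, if one lift of a p(S)-loop is an S-loop, then every lift of that loop is a loop. More precisely, if (x₀, …, xₙ) is a lift of a chain in the overlay cover of X/G, then every other lift of that chain has the form (g • x₀, …, g • xₙ) for some g ∈ G. -/
open Set Pointwise

/-- A **slice** of an action of `G` on `X`: an open set `U` such that
`U ∩ (g • U) ≠ ∅` implies `g = 1`. -/
def IsActionSlice (G : Type*) {X : Type*} [Group G] [MulAction G X]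
    [TopologicalSpace X] (U : Set X) : Prop :=
  IsOpen U ∧ ∀ g : G, (U ∩ g • U).Nonempty → g = 1

/-- A `𝒰`-**chain**: a finite sequence of points such that each pair of consecutive
points lies in a common element of `𝒰`. -/
def IsChainIn {Y : Type*} (𝒰 : Set (Set Y)) {n : ℕ} (c : Fin (n + 1) → Y) : Prop :=
  ∀ i : Fin n, ∃ U ∈ 𝒰, c i.castSucc ∈ U ∧ c i.succ ∈ U

/-- Every overlay structure arising from an overlay action of `G` on `X` is regular.
More precisely, suppose `S` is an overlay structure of the overlay action of `G` on `X`
(for the quotient map `p : X → X/G`): if two `S`-chains `c` and `d` are lifts of the same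
chain in the overlay cover `p(S)` of `X/G`, then `d` has the form `(g • c₀, …, g • cₙ)`
for some `g ∈ G`; in particular if `c` is a loop then so is `d`. -/
theorem overlay_action_structure_is_regular
    {G X : Type*} [Group G] [MulAction G X] [TopologicalSpace X]
    (S : Set (Set X))
    (hfree : ∀ (g : G) (x : X), g • x = x → g = 1)
    (hslice : ∀ U ∈ S, IsActionSlice G U)
    (hcov : ⋃₀ S = Set.univ)
    (hinv : ∀ U ∈ S, ∀ g : G, g • U ∈ S)
    (hstar : ∀ x : X, IsActionSlice G (st x S))
    {n : ℕ} (c d : Fin (n + 1) → X)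
    (hc : IsChainIn S c) (hd : IsChainIn S d)
    (hlift : ∀ i, Quotient.mk (MulAction.orbitRel G X) (c i) =
      Quotient.mk (MulAction.orbitRel G X) (d i)) :
    (∃ g : G, ∀ i, d i = g • c i) ∧
    (c 0 = c (Fin.last n) → d 0 = d (Fin.last n)) := by

  have hexists : ∀ i, ∃ g : G, d i = g • c i := by
    intro i
    have h := hlift i
    rw [Quotient.eq] at h
    obtain ⟨g, hg⟩ := h
    exact ⟨g⁻¹, by simp [← hg]⟩
  -- key step: consecutive translates agree
  have key : ∀ (i : Fin n) (g h : G), d i.castSucc = g • c i.castSucc →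
      d i.succ = h • c i.succ → h = g := by
    intro i g h hg hh
    obtain ⟨U, hU, hcU, hcU'⟩ := hc i
    obtain ⟨V, hV, hdV, hdV'⟩ := hd i
    have hgU : g • U ∈ S := hinv U hU g
    have hd_in : d i.castSucc ∈ g • U := ⟨c i.castSucc, hcU, hg.symm⟩
    have hsub1 : g • U ⊆ st (d i.castSucc) S :=
      fun y hy => ⟨g • U, ⟨hgU, hd_in⟩, hy⟩
    have hsub2 : V ⊆ st (d i.castSucc) S :=
      fun y hy => ⟨V, ⟨hV, hdV⟩, hy⟩
    have h1 : g • c i.succ ∈ st (d i.castSucc) S := hsub1 ⟨c i.succ, hcU', rfl⟩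
    have h2 : d i.succ ∈ st (d i.castSucc) S := hsub2 hdV'
    have hne : (st (d i.castSucc) S ∩ (h * g⁻¹) • st (d i.castSucc) S).Nonempty := by
      refine ⟨d i.succ, h2, g • c i.succ, h1, ?_⟩
      show (h * g⁻¹) • g • c i.succ = d i.succ
      rw [hh, smul_smul]
      congr 1
      group
    have := (hstar (d i.castSucc)).2 _ hne
    have : h = g := by
      have h1 : h * g⁻¹ = 1 := this
      calc h = h * g⁻¹ * g := by group
        _ = g := by rw [h1, one_mul]
    exact this
  obtain ⟨g, hg0⟩ := hexists 0
  have hall : ∀ i, d i = g • c i := by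
    intro i
    induction i using Fin.induction with
    | zero => exact hg0
    | succ i ih =>
      obtain ⟨h, hh⟩ := hexists i.succ
      rw [hh, key i g h ih hh]
  refine ⟨⟨g, hall⟩, fun hloop => ?_⟩
  rw [hall 0, hall (Fin.last n), hloop]
end
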